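/- Let (Ω, μ) be a finite measure space, N ∈ L²(μ), α_t > 0, and let α ≥ 0, β ≥ 0, D ≥ 0, b > 0, R₀ ≥ 1; for p ≥ 0 set s(p) = (b + p)/(b·R₀ + p) and S_f(p) = exp(−α·D·s(p) − β·D²·s(p)²). Then for all u, v ∈ L²(μ) with u ≥ 0 and v ≥ 0 a.e., |∫_Ω N(x)·S_f(u(x)/α_t) dμ − ∫_Ω N(x)·S_f(v(x)/α_t) dμ| ≤ (1/α_t)·(α·D + 2·β·D²)·((R₀ − 1)/(b·R₀²))·‖N‖_{L²(μ)}·‖u − v‖_{L²(μ)}; i.e., the exponent functional of the Tumor Control Probability is Lipschitz on the cone of nonnegative L² functions. -/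

import Mathlib

/-! On `[0, ∞)` the oxygen factor `s` takes values in `[0, 1]` and is Lipschitz with constant
`(R₀ - 1) / (b R₀²)`, its derivative `b (R₀ - 1) / (b R₀ + p)²` being largest at `p = 0`; the
exponent `α D s + β D² s²` is Lipschitz on `[0, 1]` with constant `α D + 2 β D²`, and `exp (-·)` is
`1`-Lipschitz on `[0, ∞)`. Since moreover `0 < S_f ≤ 1`, both integrals exist on a finite measure
space, and integrating the pointwise Lipschitz bound against `|N|` and applying Cauchy–Schwarz
gives the estimate. -/

open MeasureTheory

theorem Real.abs_exp_neg_sub_exp_neg_le {x y : ℝ} (hx : 0 ≤ x) (hy : 0 ≤ y) :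
    |Real.exp (-x) - Real.exp (-y)| ≤ |x - y| := by
  wlog hyx : y ≤ x generalizing x y
  · rw [abs_sub_comm, abs_sub_comm x]
    exact this hy hx (le_of_not_ge hyx)
  have hfactor : Real.exp (-y) - Real.exp (-x) = Real.exp (-y) * (1 - Real.exp (y - x)) := by
    rw [mul_sub, mul_one, ← Real.exp_add]; ring_nf
  have hexp_le : Real.exp (-y) ≤ 1 := Real.exp_le_one_iff.mpr (by linarith)
  have hgap : 1 - Real.exp (y - x) ≤ x - y := by linarith [Real.add_one_le_exp (y - x)]
  have hgap0 : 0 ≤ 1 - Real.exp (y - x) := by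
    linarith [Real.exp_le_one_iff.mpr (by linarith : y - x ≤ 0)]
  rw [abs_sub_comm, abs_of_nonneg (by rw [hfactor]; positivity), abs_of_nonneg (by linarith),
    hfactor]
  calc Real.exp (-y) * (1 - Real.exp (y - x)) ≤ 1 * (x - y) :=
        mul_le_mul hexp_le hgap hgap0 zero_le_one
    _ = x - y := one_mul _

theorem abs_mul_add_mul_sq_sub_le {a c s t : ℝ} (ha : 0 ≤ a) (hc : 0 ≤ c)
    (hs₀ : 0 ≤ s) (hs₁ : s ≤ 1) (ht₀ : 0 ≤ t) (ht₁ : t ≤ 1) :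
    |(a * s + c * s ^ 2) - (a * t + c * t ^ 2)| ≤ (a + 2 * c) * |s - t| := by
  have hfactor : (a * s + c * s ^ 2) - (a * t + c * t ^ 2) = (a + c * (s + t)) * (s - t) := by
    ring
  rw [hfactor, abs_mul, abs_of_nonneg (by positivity)]
  exact mul_le_mul_of_nonneg_right (by nlinarith) (abs_nonneg _)

noncomputable def oxygenFactor (b R₀ p : ℝ) : ℝ := (b + p) / (b * R₀ + p)

noncomputable def survivingFraction (α β D b R₀ p : ℝ) : ℝ :=
  Real.exp (-(α * D * oxygenFactor b R₀ p) - β * D ^ 2 * oxygenFactor b R₀ p ^ 2)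

section OxygenFactor

variable {b R₀ p q : ℝ}

theorem oxygenFactor_nonneg (hb : 0 ≤ b) (hR₀ : 0 ≤ R₀) (hp : 0 ≤ p) :
    0 ≤ oxygenFactor b R₀ p :=
  div_nonneg (by positivity) (by positivity)

theorem oxygenFactor_le_one (hb : 0 ≤ b) (hR₀ : 1 ≤ R₀) (hp : 0 ≤ p) :
    oxygenFactor b R₀ p ≤ 1 :=
  div_le_one_of_le₀ (by nlinarith) (by nlinarith)

theorem abs_oxygenFactor_sub_le (hb : 0 < b) (hR₀ : 1 ≤ R₀) (hp : 0 ≤ p) (hq : 0 ≤ q) :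
    |oxygenFactor b R₀ p - oxygenFactor b R₀ q| ≤ (R₀ - 1) / (b * R₀ ^ 2) * |p - q| := by
  have hbR₀ : 0 < b * R₀ := by nlinarith
  have hdp : 0 < b * R₀ + p := by linarith
  have hdq : 0 < b * R₀ + q := by linarith
  have hdiff : oxygenFactor b R₀ p - oxygenFactor b R₀ q =
      b * (R₀ - 1) * (p - q) / ((b * R₀ + p) * (b * R₀ + q)) := by
    unfold oxygenFactor; field_simp; ring
  have hden : (b * R₀) ^ 2 ≤ (b * R₀ + p) * (b * R₀ + q) := by nlinarith
  rw [hdiff, abs_div, abs_mul, abs_of_nonneg (by nlinarith : 0 ≤ b * (R₀ - 1)),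
    abs_of_pos (mul_pos hdp hdq)]
  calc b * (R₀ - 1) * |p - q| / ((b * R₀ + p) * (b * R₀ + q))
      ≤ b * (R₀ - 1) * |p - q| / (b * R₀) ^ 2 := by gcongr
    _ = (R₀ - 1) / (b * R₀ ^ 2) * |p - q| := by field_simp

end OxygenFactor

section SurvivingFraction

variable {α β D b R₀ p q : ℝ}

theorem measurable_survivingFraction : Measurable (survivingFraction α β D b R₀) := by
  unfold survivingFraction oxygenFactor; fun_prop

theorem survivingFraction_le_one (hα : 0 ≤ α) (hβ : 0 ≤ β) (hD : 0 ≤ D) (hb : 0 ≤ b)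
    (hR₀ : 0 ≤ R₀) (hp : 0 ≤ p) : survivingFraction α β D b R₀ p ≤ 1 := by
  have hs := oxygenFactor_nonneg hb hR₀ hp
  have hexponent : 0 ≤ α * D * oxygenFactor b R₀ p + β * D ^ 2 * oxygenFactor b R₀ p ^ 2 := by
    positivity
  exact Real.exp_le_one_iff.mpr (by linarith)

theorem abs_survivingFraction_sub_le (hα : 0 ≤ α) (hβ : 0 ≤ β) (hD : 0 ≤ D) (hb : 0 < b)
    (hR₀ : 1 ≤ R₀) (hp : 0 ≤ p) (hq : 0 ≤ q) :
    |survivingFraction α β D b R₀ p - survivingFraction α β D b R₀ q| ≤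
      (α * D + 2 * β * D ^ 2) * ((R₀ - 1) / (b * R₀ ^ 2)) * |p - q| := by
  set s := oxygenFactor b R₀ p
  set t := oxygenFactor b R₀ q
  have hs₀ : 0 ≤ s := oxygenFactor_nonneg hb.le (by linarith) hp
  have ht₀ : 0 ≤ t := oxygenFactor_nonneg hb.le (by linarith) hq
  have hexponent : ∀ r, -(α * D * r) - β * D ^ 2 * r ^ 2 = -(α * D * r + β * D ^ 2 * r ^ 2) :=
    fun r => by ring
  unfold survivingFraction
  rw [hexponent, hexponent]
  calc _ ≤ |(α * D * s + β * D ^ 2 * s ^ 2) - (α * D * t + β * D ^ 2 * t ^ 2)| :=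
        Real.abs_exp_neg_sub_exp_neg_le (by positivity) (by positivity)
    _ ≤ (α * D + 2 * (β * D ^ 2)) * |s - t| :=
        abs_mul_add_mul_sq_sub_le (by positivity) (by positivity) hs₀
          (oxygenFactor_le_one hb.le hR₀ hp) ht₀ (oxygenFactor_le_one hb.le hR₀ hq)
    _ ≤ (α * D + 2 * (β * D ^ 2)) * ((R₀ - 1) / (b * R₀ ^ 2) * |p - q|) := by
        gcongr; exact abs_oxygenFactor_sub_le hb hR₀ hp hq
    _ = _ := by ring

end SurvivingFraction

section Integral

variable {Ω : Type*} [MeasurableSpace Ω] {μ : Measure Ω}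

theorem integral_abs_mul_le_eLpNorm_two_mul {f g : Ω → ℝ} (hf : MemLp f 2 μ) (hg : MemLp g 2 μ) :
    ∫ x, |f x * g x| ∂μ ≤ (eLpNorm f 2 μ).toReal * (eLpNorm g 2 μ).toReal := by
  have holder : eLpNorm (f • g) 1 μ ≤ eLpNorm f 2 μ * eLpNorm g 2 μ :=
    eLpNorm_smul_le_mul_eLpNorm hg.1 hf.1
  have hL1 : ∫ x, |f x * g x| ∂μ = (eLpNorm (f * g) 1 μ).toReal := by
    rw [eLpNorm_one_eq_lintegral_enorm,
      ← integral_norm_eq_lintegral_enorm (hg.mul (r := 1) hf).1]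
    rfl
  rw [hL1, ← ENNReal.toReal_mul]
  exact ENNReal.toReal_mono (ENNReal.mul_ne_top hf.eLpNorm_ne_top hg.eLpNorm_ne_top) holder

theorem abs_integral_mul_comp_sub_le [IsFiniteMeasure μ] {N u v : Ω → ℝ} {Φ : ℝ → ℝ} {C K : ℝ}
    (hN : MemLp N 2 μ) (hu : MemLp u 2 μ) (hv : MemLp v 2 μ) (hΦ : Measurable Φ)
    (hΦ_bdd : ∀ p, 0 ≤ p → |Φ p| ≤ C)
    (hΦ_lip : ∀ p q, 0 ≤ p → 0 ≤ q → |Φ p - Φ q| ≤ K * |p - q|)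
    (hu₀ : 0 ≤ᵐ[μ] u) (hv₀ : 0 ≤ᵐ[μ] v) :
    |∫ x, N x * Φ (u x) ∂μ - ∫ x, N x * Φ (v x) ∂μ| ≤
      K * (eLpNorm N 2 μ).toReal * (eLpNorm (u - v) 2 μ).toReal := by
  have hK : 0 ≤ K := by
    simpa using (abs_nonneg _).trans (hΦ_lip 1 0 zero_le_one le_rfl)
  have hint : ∀ w : Ω → ℝ, MemLp w 2 μ → 0 ≤ᵐ[μ] w → Integrable (fun x => N x * Φ (w x)) μ :=
    fun w hw hw₀ => (hN.integrable one_le_two).mul_bdd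
      (hΦ.comp_aemeasurable hw.1.aemeasurable).aestronglyMeasurable
      (hw₀.mono fun x hx => hΦ_bdd _ hx)
  have hpointwise : ∀ᵐ x ∂μ, ‖N x * Φ (u x) - N x * Φ (v x)‖ ≤ K * |N x * (u - v) x| := by
    filter_upwards [hu₀, hv₀] with x hux hvx
    rw [Real.norm_eq_abs, ← mul_sub, abs_mul, abs_mul, Pi.sub_apply, mul_left_comm]
    exact mul_le_mul_of_nonneg_left (hΦ_lip _ _ hux hvx) (abs_nonneg _)
  calc |∫ x, N x * Φ (u x) ∂μ - ∫ x, N x * Φ (v x) ∂μ|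
      = ‖∫ x, N x * Φ (u x) - N x * Φ (v x) ∂μ‖ := by
        rw [integral_sub (hint u hu hu₀) (hint v hv hv₀), Real.norm_eq_abs]
    _ ≤ ∫ x, K * |N x * (u - v) x| ∂μ :=
        norm_integral_le_of_norm_le ((hN.integrable_mul (hu.sub hv)).abs.const_mul K) hpointwise
    _ = K * ∫ x, |N x * (u - v) x| ∂μ := integral_const_mul _ _
    _ ≤ K * ((eLpNorm N 2 μ).toReal * (eLpNorm (u - v) 2 μ).toReal) :=
        mul_le_mul_of_nonneg_left (integral_abs_mul_le_eLpNorm_two_mul hN (hu.sub hv)) hK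
    _ = _ := (mul_assoc _ _ _).symm

end Integral

/-- The exponent functional of the Tumor Control Probability,
`u ↦ ∫ N(x)·S_f(u(x)/α_t) dμ`, is Lipschitz on the cone of nonnegative `L²`
functions, with constant
`(1/α_t)·(α·D + 2·β·D²)·((R₀ − 1)/(b·R₀²))·‖N‖_{L²(μ)}`. -/
theorem TCP_exponent_lipschitz
    {Ω : Type*} [MeasurableSpace Ω] (μ : Measure Ω) [IsFiniteMeasure μ]
    (N : Ω → ℝ) (hN : MemLp N 2 μ) (αt : ℝ) (hαt : 0 < αt)
    (α β D b R₀ : ℝ) (hα : 0 ≤ α) (hβ : 0 ≤ β) (hD : 0 ≤ D)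
    (hb : 0 < b) (hR₀ : 1 ≤ R₀) :
    let s : ℝ → ℝ := fun p => (b + p) / (b * R₀ + p)
    let Sf : ℝ → ℝ := fun p => Real.exp (-(α * D * s p) - β * D ^ 2 * s p ^ 2)
    ∀ u v : Ω → ℝ, MemLp u 2 μ → MemLp v 2 μ →
      (0 ≤ᵐ[μ] u) → (0 ≤ᵐ[μ] v) →
      |(∫ x, N x * Sf (u x / αt) ∂μ) - ∫ x, N x * Sf (v x / αt) ∂μ| ≤
        (1 / αt) * (α * D + 2 * β * D ^ 2) * ((R₀ - 1) / (b * R₀ ^ 2)) *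
          (eLpNorm N 2 μ).toReal * (eLpNorm (u - v) 2 μ).toReal := by
  intro s Sf u v hu hv hu₀ hv₀
  have hlip : ∀ p q, 0 ≤ p → 0 ≤ q →
      |survivingFraction α β D b R₀ (p / αt) - survivingFraction α β D b R₀ (q / αt)| ≤
        (1 / αt) * (α * D + 2 * β * D ^ 2) * ((R₀ - 1) / (b * R₀ ^ 2)) * |p - q| := by
    intro p q hp hq
    calc _ ≤ (α * D + 2 * β * D ^ 2) * ((R₀ - 1) / (b * R₀ ^ 2)) * |p / αt - q / αt| :=
          abs_survivingFraction_sub_le hα hβ hD hb hR₀ (by positivity) (by positivity)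
      _ = _ := by rw [← sub_div, abs_div, abs_of_pos hαt]; ring
  exact abs_integral_mul_comp_sub_le (Φ := fun p => survivingFraction α β D b R₀ (p / αt))
    (C := 1) hN hu hv
    (measurable_survivingFraction.comp (measurable_id.div_const αt))
    (fun p hp => (abs_of_pos (Real.exp_pos _)).trans_le
      (survivingFraction_le_one hα hβ hD hb.le (by linarith) (by positivity)))
    hlip hu₀ hv₀
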